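/- arXiv:2405.03100 — 2 statements merged into one kernel-verified Lean document; each statement's English description precedes it below -/
import Mathlib

section
/- (Lemma, N-qudit k-setting protocol — sufficiency.) Let d ≥ 2, N > M ≥ 1, n = d^(N−M), O = Fin (d^M), and k ≥ 1. Let ρ_B be a density matrix on ℂ^n and ρ̃ : Fin k → O → Matrix n n ℂ a family such that: (i) each ρ̃ ℓ a is an unnormalized pure state; (ii) ∑_{a∈O} ρ̃ ℓ a = ρ_B for every setting ℓ; (iii) within each setting the nonzero conditional states are pairwise non-proportional (no one is a positive real multiple of another). If ρ̃ admits an LHS model, then for all settings ℓ, ℓ', the set {ρ̃ ℓ a | a ∈ O, ρ̃ ℓ a ≠ 0} equals the set {ρ̃ ℓ' a | a ∈ O, ρ̃ ℓ' a ≠ 0}. Equivalently, if at least one setting yields a set of nonzero conditional states different from another's, no LHS model exists (the steering paradox 'k_Q = (1+δ_k)_C' with 0 ≤ δ_k < k−1 for N-qudit states). -/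
/-!
Let `ξ` be a hidden state of positive weight that triggers outcome `a` of setting `ℓ` with
positive probability. Its contribution to the pure state `ρt ℓ a` is a positive multiple of the
density matrix `ρ ξ`, and a positive semidefinite summand of a rank-one matrix is proportional to
it, so `ρt ℓ a` is a positive multiple of `ρ ξ`. As the nonzero states of one setting are pairwise
non-proportional, `ξ` triggers only this outcome, with probability one. Hence
`ρt ℓ a = ∑ w ξ • ρ ξ` over the `ξ` with `ρ ξ` proportional to `ρt ℓ a`, a sum that depends only on
the ray of `ρt ℓ a`. Any such `ξ` also triggers some outcome `a'` of another setting `ℓ'`, and then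
`ρt ℓ' a'` lies on the same ray as `ρt ℓ a`, so the two are equal.
-/

open Matrix BigOperators
open scoped ComplexOrder

noncomputable section

/-- A density matrix: positive semidefinite with trace 1. -/
def IsDensityMatrix {n : ℕ} (A : Matrix (Fin n) (Fin n) ℂ) : Prop :=
  A.PosSemidef ∧ A.trace = 1

/-- An unnormalized pure state: a nonnegative real multiple of a rank-one
projection `v vᴴ` onto a unit vector `v`. -/
def IsUnnormalizedPure {n : ℕ} (A : Matrix (Fin n) (Fin n) ℂ) : Prop :=
  ∃ (c : ℝ) (v : Fin n → ℂ), 0 ≤ c ∧ star v ⬝ᵥ v = 1 ∧ A = c • vecMulVec v (star v)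

/-- `A` is a positive real multiple of `B`. -/
def IsPosMultiple {n : ℕ} (A B : Matrix (Fin n) (Fin n) ℂ) : Prop :=
  ∃ c : ℝ, 0 < c ∧ A = c • B

/-- A local-hidden-state (LHS) model for a family of unnormalized conditional
states `ρt ℓ a` (setting `ℓ`, outcome `a`). -/
def HasLHSModel {n k : ℕ} {O : Type*} [Fintype O]
    (ρt : Fin k → O → Matrix (Fin n) (Fin n) ℂ) : Prop :=
  ∃ (m : ℕ) (w : Fin m → ℝ) (ρ : Fin m → Matrix (Fin n) (Fin n) ℂ)
    (p : O → Fin k → Fin m → ℝ),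
    (∀ ξ, 0 ≤ w ξ) ∧ ((∑ ξ, w ξ) = 1) ∧
    (∀ ξ, IsDensityMatrix (ρ ξ)) ∧
    (∀ a ℓ ξ, 0 ≤ p a ℓ ξ) ∧
    (∀ ℓ ξ, (∑ a, p a ℓ ξ) = 1) ∧
    (∀ ℓ a, ρt ℓ a = ∑ ξ, p a ℓ ξ • w ξ • ρ ξ)

namespace Matrix

variable {ι 𝕜 : Type*} [Fintype ι] [RCLike 𝕜]

theorem PosSemidef.mulVec_eq_zero_of_dotProduct_add_mulVec_eq_zero {X Y : Matrix ι ι 𝕜}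
    (hX : X.PosSemidef) (hY : Y.PosSemidef) {u : ι → 𝕜}
    (h : star u ⬝ᵥ (X + Y) *ᵥ u = 0) : X *ᵥ u = 0 := by
  rw [add_mulVec, dotProduct_add] at h
  exact (hX.dotProduct_mulVec_zero_iff u).mp
    ((add_eq_zero_iff_of_nonneg (hX.dotProduct_mulVec_nonneg u)
      (hY.dotProduct_mulVec_nonneg u)).mp h).1

theorem IsHermitian.eq_smul_vecMulVec_of_mulVec_eq_zero {X : Matrix ι ι 𝕜} (hX : X.IsHermitian)
    {v : ι → 𝕜} (hv : star v ⬝ᵥ v = 1) (h : ∀ u, star v ⬝ᵥ u = 0 → X *ᵥ u = 0) :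
    X = (star v ⬝ᵥ X *ᵥ v) • vecMulVec v (star v) := by
  set P := vecMulVec v (star v)
  have hXP : X * P = X := by
    refine ext_iff_mulVec.mpr fun u => ?_
    have hperp : star v ⬝ᵥ ((star v ⬝ᵥ u) • v - u) = 0 := by
      simp [dotProduct_sub, dotProduct_smul, hv]
    rw [← mulVec_mulVec, ← sub_eq_zero, ← mulVec_sub, vecMulVec_mulVec, op_smul_eq_smul]
    exact h _ hperp
  have hPX : P * X = X := by
    have hP : Pᴴ = P := by simp [P, conjTranspose_vecMulVec]
    simpa [conjTranspose_mul, hP, hX.eq] using congrArg (·ᴴ) hXP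
  calc X = P * X * P := by rw [hPX, hXP]
    _ = _ := by rw [vecMulVec_mul, vecMulVec_mul_vecMulVec, vecMulVec_smul, dotProduct_mulVec]

theorem PosSemidef.eq_smul_vecMulVec_of_add_eq_smul {X Y : Matrix ι ι 𝕜}
    (hX : X.PosSemidef) (hY : Y.PosSemidef) {v : ι → 𝕜} (hv : star v ⬝ᵥ v = 1) {c : 𝕜}
    (h : X + Y = c • vecMulVec v (star v)) :
    X = (star v ⬝ᵥ X *ᵥ v) • vecMulVec v (star v) :=
  hX.isHermitian.eq_smul_vecMulVec_of_mulVec_eq_zero hv fun u hu =>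
    hX.mulVec_eq_zero_of_dotProduct_add_mulVec_eq_zero hY <| by
      rw [h, smul_mulVec, vecMulVec_mulVec, hu]
      simp

end Matrix

section States

variable {n : ℕ} {A B C : Matrix (Fin n) (Fin n) ℂ}

theorem IsPosMultiple.symm (h : IsPosMultiple A B) : IsPosMultiple B A := by
  obtain ⟨c, hc, rfl⟩ := h
  exact ⟨c⁻¹, inv_pos.mpr hc, by rw [smul_smul, inv_mul_cancel₀ hc.ne', one_smul]⟩

theorem IsPosMultiple.trans (hAB : IsPosMultiple A B) (hBC : IsPosMultiple B C) :
    IsPosMultiple A C := by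
  obtain ⟨c, hc, rfl⟩ := hAB
  obtain ⟨c', hc', rfl⟩ := hBC
  exact ⟨c * c', mul_pos hc hc', by rw [smul_smul]⟩

theorem IsPosMultiple.ne_zero (h : IsPosMultiple A B) (hB : B ≠ 0) : A ≠ 0 := by
  obtain ⟨c, hc, rfl⟩ := h
  exact smul_ne_zero hc.ne' hB

theorem IsDensityMatrix.ne_zero (h : IsDensityMatrix A) : A ≠ 0 := by
  rintro rfl
  simpa using h.2

theorem IsDensityMatrix.eq_vecMulVec_of_smul_add_eq {ρ Y : Matrix (Fin n) (Fin n) ℂ}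
    (hρ : IsDensityMatrix ρ) (hY : Y.PosSemidef) {s c : ℝ} (hs : 0 < s) {v : Fin n → ℂ}
    (hv : star v ⬝ᵥ v = 1) (h : s • ρ + Y = c • vecMulVec v (star v)) :
    ρ = vecMulVec v (star v) := by
  have hsρ := (hρ.1.smul hs.le).eq_smul_vecMulVec_of_add_eq_smul hY hv (c := (c : ℂ))
    (by rw [h, Complex.coe_smul])
  have ht : star v ⬝ᵥ (s • ρ) *ᵥ v = s := by
    simpa [hρ.2, hv, dotProduct_comm v] using (congrArg trace hsρ).symm
  rw [ht, Complex.coe_smul] at hsρ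
  exact smul_right_injective _ hs.ne' hsρ

theorem trace_sum_smul_of_isDensityMatrix {Ξ : Type*} [Fintype Ξ] {q : Ξ → ℝ}
    {ρ : Ξ → Matrix (Fin n) (Fin n) ℂ} (hρ : ∀ ξ, IsDensityMatrix (ρ ξ)) :
    (∑ ξ, q ξ • ρ ξ).trace = ((∑ ξ, q ξ : ℝ) : ℂ) := by
  simp [trace_sum, (hρ _).2]

theorem IsUnnormalizedPure.isPosMultiple_of_eq_sum {Ξ : Type*} [Fintype Ξ]
    (hA : IsUnnormalizedPure A) {q : Ξ → ℝ} {ρ : Ξ → Matrix (Fin n) (Fin n) ℂ}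
    (hq : ∀ ξ, 0 ≤ q ξ) (hρ : ∀ ξ, IsDensityMatrix (ρ ξ)) (h : A = ∑ ξ, q ξ • ρ ξ)
    {ξ : Ξ} (hξ : 0 < q ξ) : IsPosMultiple A (ρ ξ) := by
  classical
  obtain ⟨c, v, -, hv, rfl⟩ := hA
  have hρξ : ρ ξ = vecMulVec v (star v) :=
    (hρ ξ).eq_vecMulVec_of_smul_add_eq
      (posSemidef_sum (Finset.univ.erase ξ) fun ξ' _ => (hρ ξ').1.smul (hq ξ')) hξ hv
      ((Finset.add_sum_erase _ (fun ξ' => q ξ' • ρ ξ') (Finset.mem_univ ξ)).trans h.symm)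
  have hc : c = ∑ ξ', q ξ' := by
    have := congrArg trace h
    rw [trace_sum_smul_of_isDensityMatrix hρ] at this
    simp only [trace_smul, trace_vecMulVec, dotProduct_comm v, hv, Complex.real_smul,
      mul_one] at this
    exact_mod_cast this
  refine ⟨c, hc ▸ hξ.trans_le (Finset.single_le_sum (fun ξ' _ => hq ξ') (Finset.mem_univ ξ)), ?_⟩
  rw [hρξ]

def PairwiseNonProportional {O : Type*} (f : O → Matrix (Fin n) (Fin n) ℂ) : Prop :=
  ∀ a a', a ≠ a' → f a ≠ 0 → f a' ≠ 0 → ¬ IsPosMultiple (f a) (f a')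

theorem PairwiseNonProportional.eq_of_isPosMultiple {O : Type*}
    {f : O → Matrix (Fin n) (Fin n) ℂ} (hf : PairwiseNonProportional f) (hB : B ≠ 0)
    {a a' : O} (ha : IsPosMultiple (f a) B) (ha' : IsPosMultiple (f a') B) : a = a' := by
  by_contra hne
  exact hf a a' hne (ha.ne_zero hB) (ha'.ne_zero hB) (ha.trans ha'.symm)

end States

structure IsLHSModel {n : ℕ} {L O Ξ : Type*} [Fintype O] [Fintype Ξ]
    (ρt : L → O → Matrix (Fin n) (Fin n) ℂ) (w : Ξ → ℝ) (ρ : Ξ → Matrix (Fin n) (Fin n) ℂ)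
    (p : O → L → Ξ → ℝ) : Prop where
  weight_nonneg : ∀ ξ, 0 ≤ w ξ
  isDensityMatrix : ∀ ξ, IsDensityMatrix (ρ ξ)
  response_nonneg : ∀ a ℓ ξ, 0 ≤ p a ℓ ξ
  sum_response : ∀ ℓ ξ, ∑ a, p a ℓ ξ = 1
  eq_sum : ∀ ℓ a, ρt ℓ a = ∑ ξ, p a ℓ ξ • w ξ • ρ ξ

namespace IsLHSModel

variable {n : ℕ} {L O Ξ : Type*} [Fintype O] [Fintype Ξ] {ρt : L → O → Matrix (Fin n) (Fin n) ℂ}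
  {w : Ξ → ℝ} {ρ : Ξ → Matrix (Fin n) (Fin n) ℂ} {p : O → L → Ξ → ℝ}

theorem exists_response_pos (h : IsLHSModel ρt w ρ p) (ℓ : L) (ξ : Ξ) : ∃ a, 0 < p a ℓ ξ := by
  have hsum : ∑ _a : O, (0 : ℝ) < ∑ a, p a ℓ ξ := by simp [h.sum_response]
  simpa using Finset.exists_lt_of_sum_lt hsum

theorem isPosMultiple_of_response_pos (h : IsLHSModel ρt w ρ p)
    (hpure : ∀ ℓ a, IsUnnormalizedPure (ρt ℓ a)) {ℓ : L} {a : O} {ξ : Ξ} (hw : 0 < w ξ)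
    (hp : 0 < p a ℓ ξ) : IsPosMultiple (ρt ℓ a) (ρ ξ) :=
  (hpure ℓ a).isPosMultiple_of_eq_sum
    (fun ξ' => mul_nonneg (h.response_nonneg a ℓ ξ') (h.weight_nonneg ξ')) h.isDensityMatrix
    (by simp only [h.eq_sum, smul_smul]) (mul_pos hp hw)

theorem response_pos_iff (h : IsLHSModel ρt w ρ p) (hpure : ∀ ℓ a, IsUnnormalizedPure (ρt ℓ a))
    (hdist : ∀ ℓ, PairwiseNonProportional (ρt ℓ)) {ℓ : L} {a : O} {ξ : Ξ} (hw : 0 < w ξ) :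
    0 < p a ℓ ξ ↔ IsPosMultiple (ρt ℓ a) (ρ ξ) := by
  refine ⟨h.isPosMultiple_of_response_pos hpure hw, fun ha => ?_⟩
  obtain ⟨b, hb⟩ := h.exists_response_pos ℓ ξ
  rwa [(hdist ℓ).eq_of_isPosMultiple (h.isDensityMatrix ξ).ne_zero ha
    (h.isPosMultiple_of_response_pos hpure hw hb)]

theorem response_eq_one (h : IsLHSModel ρt w ρ p) (hpure : ∀ ℓ a, IsUnnormalizedPure (ρt ℓ a))
    (hdist : ∀ ℓ, PairwiseNonProportional (ρt ℓ)) {ℓ : L} {a : O} {ξ : Ξ} (hw : 0 < w ξ)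
    (hp : 0 < p a ℓ ξ) : p a ℓ ξ = 1 := by
  rw [← h.sum_response ℓ ξ, Finset.sum_eq_single_of_mem a (Finset.mem_univ a)]
  intro b _ hba
  refine ((h.response_nonneg b ℓ ξ).lt_or_eq.resolve_left fun hb => hba ?_).symm
  exact (hdist ℓ).eq_of_isPosMultiple (h.isDensityMatrix ξ).ne_zero
    (h.isPosMultiple_of_response_pos hpure hw hb) (h.isPosMultiple_of_response_pos hpure hw hp)

theorem response_mul_weight_eq_indicator (h : IsLHSModel ρt w ρ p)
    (hpure : ∀ ℓ a, IsUnnormalizedPure (ρt ℓ a)) (hdist : ∀ ℓ, PairwiseNonProportional (ρt ℓ))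
    (ℓ : L) (a : O) (ξ : Ξ) :
    p a ℓ ξ * w ξ = {ξ | IsPosMultiple (ρt ℓ a) (ρ ξ)}.indicator w ξ := by
  rcases (h.weight_nonneg ξ).eq_or_lt with hw | hw
  · rw [← hw, mul_zero, eq_comm, Set.indicator_apply_eq_zero]
    exact fun _ => hw.symm
  have hpos_iff : 0 < p a ℓ ξ ↔ _ := h.response_pos_iff hpure hdist hw
  rcases (h.response_nonneg a ℓ ξ).eq_or_lt with hp | hp
  · rw [← hp, zero_mul, eq_comm, Set.indicator_apply_eq_zero]
    exact fun hξ => absurd (hpos_iff.mpr hξ) hp.ge.not_gt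
  · rw [h.response_eq_one hpure hdist hw hp, one_mul, eq_comm, Set.indicator_apply_eq_self]
    exact fun hξ => absurd (hpos_iff.mp hp) hξ

theorem eq_sum_indicator (h : IsLHSModel ρt w ρ p) (hpure : ∀ ℓ a, IsUnnormalizedPure (ρt ℓ a))
    (hdist : ∀ ℓ, PairwiseNonProportional (ρt ℓ)) (ℓ : L) (a : O) :
    ρt ℓ a = ∑ ξ, {ξ | IsPosMultiple (ρt ℓ a) (ρ ξ)}.indicator w ξ • ρ ξ := by
  conv_lhs => rw [h.eq_sum]
  simp only [smul_smul, h.response_mul_weight_eq_indicator hpure hdist]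

theorem eq_of_isPosMultiple (h : IsLHSModel ρt w ρ p)
    (hpure : ∀ ℓ a, IsUnnormalizedPure (ρt ℓ a)) (hdist : ∀ ℓ, PairwiseNonProportional (ρt ℓ))
    {ℓ ℓ' : L} {a a' : O} (hA : IsPosMultiple (ρt ℓ a) (ρt ℓ' a')) : ρt ℓ a = ρt ℓ' a' := by
  have hset : {ξ | IsPosMultiple (ρt ℓ a) (ρ ξ)} = {ξ | IsPosMultiple (ρt ℓ' a') (ρ ξ)} :=
    Set.ext fun ξ => ⟨hA.symm.trans, hA.trans⟩
  rw [h.eq_sum_indicator hpure hdist ℓ a, h.eq_sum_indicator hpure hdist ℓ' a', hset]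

theorem exists_eq_of_ne_zero (h : IsLHSModel ρt w ρ p)
    (hpure : ∀ ℓ a, IsUnnormalizedPure (ρt ℓ a)) (hdist : ∀ ℓ, PairwiseNonProportional (ρt ℓ))
    {ℓ : L} {a : O} (hA : ρt ℓ a ≠ 0) (ℓ' : L) : ∃ a', ρt ℓ' a' ≠ 0 ∧ ρt ℓ' a' = ρt ℓ a := by
  obtain ⟨ξ, -, hξ⟩ := Finset.exists_ne_zero_of_sum_ne_zero (h.eq_sum ℓ a ▸ hA)
  have hw : 0 < w ξ := (h.weight_nonneg ξ).lt_of_ne' fun hw => hξ (by simp [hw])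
  have hp : 0 < p a ℓ ξ := (h.response_nonneg a ℓ ξ).lt_of_ne' fun hp => hξ (by simp [hp])
  obtain ⟨a', hp'⟩ := h.exists_response_pos ℓ' ξ
  have hA' := h.isPosMultiple_of_response_pos hpure hw hp'
  have hA := h.isPosMultiple_of_response_pos hpure hw hp
  exact ⟨a', hA'.ne_zero (h.isDensityMatrix ξ).ne_zero,
    h.eq_of_isPosMultiple hpure hdist (hA'.trans hA.symm)⟩

theorem setOf_ne_zero_eq (h : IsLHSModel ρt w ρ p) (hpure : ∀ ℓ a, IsUnnormalizedPure (ρt ℓ a))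
    (hdist : ∀ ℓ, PairwiseNonProportional (ρt ℓ)) (ℓ ℓ' : L) :
    {A | ∃ a, ρt ℓ a ≠ 0 ∧ ρt ℓ a = A} = {A | ∃ a, ρt ℓ' a ≠ 0 ∧ ρt ℓ' a = A} := by
  have hsub : ∀ ℓ ℓ',
      {A | ∃ a, ρt ℓ a ≠ 0 ∧ ρt ℓ a = A} ⊆ {A | ∃ a, ρt ℓ' a ≠ 0 ∧ ρt ℓ' a = A} := by
    rintro ℓ ℓ' _ ⟨a, ha, rfl⟩
    exact h.exists_eq_of_ne_zero hpure hdist ha ℓ'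
  exact (hsub ℓ ℓ').antisymm (hsub ℓ' ℓ)

end IsLHSModel

theorem qudit_lhs_implies_same_results_general {d N M k : ℕ}
    (ρt : Fin k → Fin (d ^ M) → Matrix (Fin (d ^ (N - M))) (Fin (d ^ (N - M))) ℂ)
    (hpure : ∀ ℓ a, IsUnnormalizedPure (ρt ℓ a))
    (hdist : ∀ ℓ a a', a ≠ a' → ρt ℓ a ≠ 0 → ρt ℓ a' ≠ 0 →
      ¬ IsPosMultiple (ρt ℓ a) (ρt ℓ a'))
    (hLHS : HasLHSModel ρt) :
    ∀ ℓ ℓ' : Fin k,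
      {A | ∃ a, ρt ℓ a ≠ 0 ∧ ρt ℓ a = A} = {A | ∃ a, ρt ℓ' a ≠ 0 ∧ ρt ℓ' a = A} := by
  obtain ⟨m, w, ρ, p, hw, -, hρ, hp, hp1, hmodel⟩ := hLHS
  exact IsLHSModel.setOf_ne_zero_eq ⟨hw, hρ, hp, hp1, hmodel⟩ hpure hdist

/-- N-qudit k-setting lemma, sufficiency: if Bob's conditional
states (all unnormalized pure states, summing to his reduced density matrix
`ρB` in every setting, and pairwise non-proportional within each setting when
nonzero) admit an LHS model, then all `k` settings produce the same set of
nonzero conditional states. -/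
theorem qudit_lhs_implies_same_results {d N M k : ℕ} (hd : 2 ≤ d)
    (hM : 1 ≤ M) (hNM : M < N) (hk : 1 ≤ k)
    (ρB : Matrix (Fin (d ^ (N - M))) (Fin (d ^ (N - M))) ℂ)
    (hρB : IsDensityMatrix ρB)
    (ρt : Fin k → Fin (d ^ M) → Matrix (Fin (d ^ (N - M))) (Fin (d ^ (N - M))) ℂ)
    (hpure : ∀ ℓ a, IsUnnormalizedPure (ρt ℓ a))
    (hsum : ∀ ℓ, (∑ a, ρt ℓ a) = ρB)
    (hdist : ∀ ℓ a a', a ≠ a' → ρt ℓ a ≠ 0 → ρt ℓ a' ≠ 0 →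
      ¬ IsPosMultiple (ρt ℓ a) (ρt ℓ a'))
    (hLHS : HasLHSModel ρt) :
    ∀ ℓ ℓ' : Fin k,
      {A | ∃ a, ρt ℓ a ≠ 0 ∧ ρt ℓ a = A} = {A | ∃ a, ρt ℓ' a ≠ 0 ∧ ρt ℓ' a = A} :=
  qudit_lhs_implies_same_results_general ρt hpure hdist hLHS
end
end

section
/- (Example 4: the W state.) The 2-setting, 4-outcome family ρ̃ : Fin 2 → Fin 4 → Matrix 2 2 ℂ given by: setting 0: ρ̃ 0 0 = (1/3) • !![0,0;0,1], ρ̃ 0 1 = (1/3) • !![1,0;0,0], ρ̃ 0 2 = (1/3) • !![1,0;0,0], ρ̃ 0 3 = 0; setting 1: ρ̃ 1 0 = (1/12) • !![4,2;2,1], ρ̃ 1 1 = (1/12) • !![0,0;0,1], ρ̃ 1 2 = (1/12) • !![0,0;0,1], ρ̃ 1 3 = (1/12) • !![4,−2;−2,1]; admits no LHS model (the EPR steering paradox '2_Q = (1+δ)_C' with 0 < δ < 1 for the W state). -/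
open Matrix BigOperators
open scoped ComplexOrder

noncomputable section

/-!
Every hidden state `ρ ξ` of positive weight must produce some outcome `a` of the `zz` setting,
and then, being positive semidefinite, it annihilates every vector annihilated by `ρt 0 a`; all
these kernels contain `|0⟩` or `|1⟩`. If `ρ ξ` also contributed to the `xx` outcome `0`, it would
annihilate `(1, -2)`, which spans the kernel of `ρt 1 0`, hence vanish, contradicting
`tr ρ ξ = 1`. So no hidden state contributes to `ρt 1 0`, which is nonzero.
-/

namespace Matrix

variable {n ι 𝕜 : Type*} [Fintype n] [RCLike 𝕜]

theorem PosSemidef.mulVec_eq_zero_of_sum_mulVec_eq_zero {A : ι → Matrix n n 𝕜} {s : Finset ι}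
    (hA : ∀ i ∈ s, (A i).PosSemidef) {u : n → 𝕜} (hu : (∑ i ∈ s, A i) *ᵥ u = 0) :
    ∀ i ∈ s, A i *ᵥ u = 0 := by
  have hsum : ∑ i ∈ s, star u ⬝ᵥ A i *ᵥ u = 0 := by
    rw [← dotProduct_sum, ← sum_mulVec, hu, dotProduct_zero]
  intro i hi
  refine ((hA i hi).dotProduct_mulVec_zero_iff u).mp ?_
  exact (Finset.sum_eq_zero_iff_of_nonneg fun j hj ↦ (hA j hj).dotProduct_mulVec_nonneg u).mp
    hsum i hi

theorem PosSemidef.mulVec_eq_zero_of_sum_smul_mulVec_eq_zero [Fintype ι] {c : ι → ℝ}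
    {ρ : ι → Matrix n n 𝕜} (hc : ∀ i, 0 ≤ c i) (hρ : ∀ i, (ρ i).PosSemidef) {u : n → 𝕜}
    (hu : (∑ i, c i • ρ i) *ᵥ u = 0) {i : ι} (hi : c i ≠ 0) : ρ i *ᵥ u = 0 := by
  have h := mulVec_eq_zero_of_sum_mulVec_eq_zero (fun j _ ↦ (hρ j).smul (hc j)) hu i
    (Finset.mem_univ i)
  rwa [smul_mulVec, smul_eq_zero, or_iff_right hi] at h

theorem eq_zero_of_mulVec_eq_zero_fin_two {R : Type*} [CommRing R] [IsDomain R]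
    {M : Matrix (Fin 2) (Fin 2) R} {x y : Fin 2 → R} (hxy : x 0 * y 1 - x 1 * y 0 ≠ 0)
    (hx : M *ᵥ x = 0) (hy : M *ᵥ y = 0) : M = 0 := by
  ext i j
  have hxi := congrFun hx i
  have hyi := congrFun hy i
  simp only [mulVec, dotProduct, Fin.sum_univ_two, Pi.zero_apply] at hxi hyi
  fin_cases j
  · exact (mul_eq_zero.mp (by linear_combination y 1 * hxi - x 1 * hyi :
      M i 0 * (x 0 * y 1 - x 1 * y 0) = 0)).resolve_right hxy
  · exact (mul_eq_zero.mp (by linear_combination x 0 * hyi - y 0 * hxi :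
      M i 1 * (x 0 * y 1 - x 1 * y 0) = 0)).resolve_right hxy

end Matrix

theorem example4_w_state_general
    (ρt : Fin 2 → Fin 4 → Matrix (Fin 2) (Fin 2) ℂ)
    (h00 : ρt 0 0 = (1 / 3 : ℝ) • !![0, 0; 0, 1])
    (h01 : ρt 0 1 = (1 / 3 : ℝ) • !![1, 0; 0, 0])
    (h02 : ρt 0 2 = (1 / 3 : ℝ) • !![1, 0; 0, 0])
    (h03 : ρt 0 3 = 0)
    (h10 : ρt 1 0 = (1 / 12 : ℝ) • !![4, 2; 2, 1]) :
    ¬ HasLHSModel ρt := by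
  rintro ⟨m, w, ρ, p, hw, -, hρ, hp, hpsum, hmodel⟩
  have hkernel : ∀ ℓ a ξ u, ρt ℓ a *ᵥ u = 0 → p a ℓ ξ * w ξ ≠ 0 → ρ ξ *ᵥ u = 0 := by
    intro ℓ a ξ u hu hξ
    simp only [hmodel, smul_smul] at hu
    exact PosSemidef.mulVec_eq_zero_of_sum_smul_mulVec_eq_zero
      (fun ξ ↦ mul_nonneg (hp a ℓ ξ) (hw ξ)) (fun ξ ↦ (hρ ξ).1) hu hξ
  have hzz : ∀ a, ρt 0 a *ᵥ ![1, 0] = 0 ∨ ρt 0 a *ᵥ ![0, 1] = 0 := by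
    intro a
    fin_cases a
    · exact .inl (by ext i; fin_cases i <;> simp [h00])
    · exact .inr (by ext i; fin_cases i <;> simp [h01])
    · exact .inr (by ext i; fin_cases i <;> simp [h02])
    · exact .inl (by simp [h03])
  have hxx : ρt 1 0 *ᵥ ![1, -2] = 0 := by
    ext i; fin_cases i <;> norm_num [h10, mulVec, dotProduct]
  have hcoef : ∀ ξ, p 0 1 ξ * w ξ = 0 := by
    intro ξ
    by_contra hξ
    obtain ⟨a, -, ha⟩ := Finset.exists_ne_zero_of_sum_ne_zero (by simp [hpsum] : ∑ a, p a 0 ξ ≠ 0)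
    have haξ : p a 0 ξ * w ξ ≠ 0 := mul_ne_zero ha (right_ne_zero_of_mul hξ)
    have hv := hkernel 1 0 ξ _ hxx hξ
    have hzero : ρ ξ = 0 := by
      rcases hzz a with h | h <;>
        exact eq_zero_of_mulVec_eq_zero_fin_two (by norm_num) (hkernel 0 a ξ _ h haξ) hv
    simpa [hzero] using (hρ ξ).2
  have hvanish : ρt 1 0 = 0 := by
    simp only [hmodel, smul_smul, hcoef, zero_smul, Finset.sum_const_zero]
  have := congrFun (congrFun hvanish 0) 0
  norm_num [h10] at this

/-- Example 4, the W state: Bob's eight unnormalized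
conditional states for the W state `|W⟩ = (|100⟩+|010⟩+|001⟩)/√3` under the
`zz` and `xx` settings admit no LHS model (the paradox "2_Q = (1+δ)_C" with
`0 < δ < 1`). -/
theorem example4_w_state
    (ρt : Fin 2 → Fin 4 → Matrix (Fin 2) (Fin 2) ℂ)
    (h00 : ρt 0 0 = (1 / 3 : ℝ) • !![0, 0; 0, 1])
    (h01 : ρt 0 1 = (1 / 3 : ℝ) • !![1, 0; 0, 0])
    (h02 : ρt 0 2 = (1 / 3 : ℝ) • !![1, 0; 0, 0])
    (h03 : ρt 0 3 = 0)
    (h10 : ρt 1 0 = (1 / 12 : ℝ) • !![4, 2; 2, 1])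
    (h11 : ρt 1 1 = (1 / 12 : ℝ) • !![0, 0; 0, 1])
    (h12 : ρt 1 2 = (1 / 12 : ℝ) • !![0, 0; 0, 1])
    (h13 : ρt 1 3 = (1 / 12 : ℝ) • !![4, -2; -2, 1]) :
    ¬ HasLHSModel ρt :=
  example4_w_state_general ρt h00 h01 h02 h03 h10
end
end
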